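/- Every strong Ann-category is a ring category. Precisely: let 𝒜 be an Ann-category that is strong, i.e. L̂^0 = R̂^0 : 0 ⊗ 0 → 0. Set x_A := L̂^A : A ⊗ 0 → 0 and y_A := R̂^A : 0 ⊗ A → 0 for each object A. Then the data (𝒜, ⊕, ⊗, a⁺, a, c, (0, g, d), (1, l, r), v := 𝔏, w := ℜ, x, y) satisfies all the axioms K1–K18 of a ring category; in particular: (K1) c is a symmetry; (K2–K5) 𝔏 and ℜ are compatible with c and a⁺; (K6–K9) the mixed coherence diagrams between a, 𝔏, ℜ commute; (K10) x_0 = y_0; (K11) g_0 ∘ (y_A ⊕ y_B) ∘ 𝔏_{0,A,B} = y_{A⊕B}; (K12) g_0 ∘ (x_A ⊕ x_B) ∘ ℜ_{A,B,0} = x_{A⊕B}; (K13) y_1 = r_0; (K14) x_1 = l_0; (K15) y_{A⊗B} = y_B ∘ (y_A ⊗ id_B) ∘ a_{0,A,B}; (K16) x_A ∘ (id_A ⊗ y_B) = y_B ∘ (x_A ⊗ id_B) ∘ a_{A,0,B} and x_{A⊗B} ∘ a_{A,B,0} = x_A ∘ (id_A ⊗ x_B); (K17) g_{A⊗B} ∘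 (x_A ⊕ id_{A⊗B}) ∘ 𝔏_{A,0,B} = id_A ⊗ g_B; (K18) the three analogous unit diagrams for (0⊕B)⊗A, A⊗(B⊕0) and (B⊕0)⊗A commute. -/
import Mathlib


open CategoryTheory

universe v u

/-- An Ann-category: a groupoid with a symmetric monoidal (Picard) structure `⊕`
(`add`, constraints `aPlus`, `csym`, unit `zero` with `gl`, `dr`), a monoidal
structure `⊗` (`mul`, constraint `aMul`, unit `one` with `lu`, `ru`), and
distributivity isomorphisms `distL` (𝔏) and `distR` (ℜ) satisfying (Ann-1),
(Ann-2) and (Ann-3). -/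
structure AnnCat (C : Type u) [Groupoid.{v} C] where
  add : C → C → C
  addHom : ∀ {X₁ Y₁ X₂ Y₂ : C}, (X₁ ⟶ Y₁) → (X₂ ⟶ Y₂) → (add X₁ X₂ ⟶ add Y₁ Y₂)
  addHom_id : ∀ (X Y : C), addHom (𝟙 X) (𝟙 Y) = 𝟙 (add X Y)
  addHom_comp : ∀ {X₁ Y₁ Z₁ X₂ Y₂ Z₂ : C} (f₁ : X₁ ⟶ Y₁) (g₁ : Y₁ ⟶ Z₁)
    (f₂ : X₂ ⟶ Y₂) (g₂ : Y₂ ⟶ Z₂),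
    addHom (f₁ ≫ g₁) (f₂ ≫ g₂) = addHom f₁ f₂ ≫ addHom g₁ g₂
  zero : C
  aPlus : ∀ (X Y Z : C), add X (add Y Z) ≅ add (add X Y) Z
  aPlus_natural : ∀ {X X' Y Y' Z Z' : C} (f : X ⟶ X') (g : Y ⟶ Y') (h : Z ⟶ Z'),
    addHom f (addHom g h) ≫ (aPlus X' Y' Z').hom
      = (aPlus X Y Z).hom ≫ addHom (addHom f g) h
  csym : ∀ (X Y : C), add X Y ≅ add Y X
  csym_natural : ∀ {X X' Y Y' : C} (f : X ⟶ X') (g : Y ⟶ Y'),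
    addHom f g ≫ (csym X' Y').hom = (csym X Y).hom ≫ addHom g f
  csym_symm : ∀ (X Y : C), (csym X Y).hom ≫ (csym Y X).hom = 𝟙 (add X Y)
  gl : ∀ (X : C), add zero X ≅ X
  gl_natural : ∀ {X Y : C} (f : X ⟶ Y), addHom (𝟙 zero) f ≫ (gl Y).hom = (gl X).hom ≫ f
  dr : ∀ (X : C), add X zero ≅ X
  dr_natural : ∀ {X Y : C} (f : X ⟶ Y), addHom f (𝟙 zero) ≫ (dr Y).hom = (dr X).hom ≫ f
  add_pentagon : ∀ (W X Y Z : C),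
    addHom (𝟙 W) (aPlus X Y Z).hom ≫ (aPlus W (add X Y) Z).hom
        ≫ addHom (aPlus W X Y).hom (𝟙 Z)
      = (aPlus W X (add Y Z)).hom ≫ (aPlus (add W X) Y Z).hom
  add_triangle : ∀ (X Y : C),
    (aPlus X zero Y).hom ≫ addHom (dr X).hom (𝟙 Y) = addHom (𝟙 X) (gl Y).hom
  add_hexagon : ∀ (X Y Z : C),
    (aPlus X Y Z).hom ≫ (csym (add X Y) Z).hom ≫ (aPlus Z X Y).hom
      = addHom (𝟙 X) (csym Y Z).hom ≫ (aPlus X Z Y).hom ≫ addHom (csym X Z).hom (𝟙 Y)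
  add_inv : ∀ X : C, ∃ X' : C, Nonempty (add X X' ≅ zero)
  mul : C → C → C
  mulHom : ∀ {X₁ Y₁ X₂ Y₂ : C}, (X₁ ⟶ Y₁) → (X₂ ⟶ Y₂) → (mul X₁ X₂ ⟶ mul Y₁ Y₂)
  mulHom_id : ∀ (X Y : C), mulHom (𝟙 X) (𝟙 Y) = 𝟙 (mul X Y)
  mulHom_comp : ∀ {X₁ Y₁ Z₁ X₂ Y₂ Z₂ : C} (f₁ : X₁ ⟶ Y₁) (g₁ : Y₁ ⟶ Z₁)
    (f₂ : X₂ ⟶ Y₂) (g₂ : Y₂ ⟶ Z₂),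
    mulHom (f₁ ≫ g₁) (f₂ ≫ g₂) = mulHom f₁ f₂ ≫ mulHom g₁ g₂
  one : C
  aMul : ∀ (X Y Z : C), mul X (mul Y Z) ≅ mul (mul X Y) Z
  aMul_natural : ∀ {X X' Y Y' Z Z' : C} (f : X ⟶ X') (g : Y ⟶ Y') (h : Z ⟶ Z'),
    mulHom f (mulHom g h) ≫ (aMul X' Y' Z').hom
      = (aMul X Y Z).hom ≫ mulHom (mulHom f g) h
  lu : ∀ (X : C), mul one X ≅ X
  lu_natural : ∀ {X Y : C} (f : X ⟶ Y), mulHom (𝟙 one) f ≫ (lu Y).hom = (lu X).hom ≫ f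
  ru : ∀ (X : C), mul X one ≅ X
  ru_natural : ∀ {X Y : C} (f : X ⟶ Y), mulHom f (𝟙 one) ≫ (ru Y).hom = (ru X).hom ≫ f
  mul_pentagon : ∀ (W X Y Z : C),
    mulHom (𝟙 W) (aMul X Y Z).hom ≫ (aMul W (mul X Y) Z).hom
        ≫ mulHom (aMul W X Y).hom (𝟙 Z)
      = (aMul W X (mul Y Z)).hom ≫ (aMul (mul W X) Y Z).hom
  mul_triangle : ∀ (X Y : C),
    (aMul X one Y).hom ≫ mulHom (ru X).hom (𝟙 Y) = mulHom (𝟙 X) (lu Y).hom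
  distL : ∀ (A X Y : C), mul A (add X Y) ≅ add (mul A X) (mul A Y)
  distL_natural : ∀ {A A' X X' Y Y' : C} (f : A ⟶ A') (u : X ⟶ X') (w : Y ⟶ Y'),
    mulHom f (addHom u w) ≫ (distL A' X' Y').hom
      = (distL A X Y).hom ≫ addHom (mulHom f u) (mulHom f w)
  distR : ∀ (X Y A : C), mul (add X Y) A ≅ add (mul X A) (mul Y A)
  distR_natural : ∀ {X X' Y Y' A A' : C} (u : X ⟶ X') (w : Y ⟶ Y') (f : A ⟶ A'),
    mulHom (addHom u w) f ≫ (distR X' Y' A').hom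
      = (distR X Y A).hom ≫ addHom (mulHom u f) (mulHom w f)
  -- (Ann-1): (A ⊗ −, 𝔏) and (− ⊗ A, ℜ) are ⊕-functors compatible with a⁺ and c
  distL_aPlus : ∀ (A X Y Z : C),
    mulHom (𝟙 A) (aPlus X Y Z).hom ≫ (distL A (add X Y) Z).hom
        ≫ addHom (distL A X Y).hom (𝟙 (mul A Z))
      = (distL A X (add Y Z)).hom ≫ addHom (𝟙 (mul A X)) (distL A Y Z).hom
        ≫ (aPlus (mul A X) (mul A Y) (mul A Z)).hom
  distL_csym : ∀ (A X Y : C),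
    mulHom (𝟙 A) (csym X Y).hom ≫ (distL A Y X).hom
      = (distL A X Y).hom ≫ (csym (mul A X) (mul A Y)).hom
  distR_aPlus : ∀ (X Y Z A : C),
    mulHom (aPlus X Y Z).hom (𝟙 A) ≫ (distR (add X Y) Z A).hom
        ≫ addHom (distR X Y A).hom (𝟙 (mul Z A))
      = (distR X (add Y Z) A).hom ≫ addHom (𝟙 (mul X A)) (distR Y Z A).hom
        ≫ (aPlus (mul X A) (mul Y A) (mul Z A)).hom
  distR_csym : ∀ (X Y A : C),
    mulHom (csym X Y).hom (𝟙 A) ≫ (distR Y X A).hom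
      = (distR X Y A).hom ≫ (csym (mul X A) (mul Y A)).hom
  -- (Ann-2)
  ann11 : ∀ (A B X Y : C),
    mulHom (𝟙 A) (distL B X Y).hom ≫ (distL A (mul B X) (mul B Y)).hom
        ≫ addHom (aMul A B X).hom (aMul A B Y).hom
      = (aMul A B (add X Y)).hom ≫ (distL (mul A B) X Y).hom
  ann11' : ∀ (X Y B A : C),
    (aMul (add X Y) B A).hom ≫ mulHom (distR X Y B).hom (𝟙 A)
        ≫ (distR (mul X B) (mul Y B) A).hom
      = (distR X Y (mul B A)).hom ≫ addHom (aMul X B A).hom (aMul Y B A).hom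
  ann12 : ∀ (A X Y B : C),
    (aMul A (add X Y) B).hom ≫ mulHom (distL A X Y).hom (𝟙 B)
        ≫ (distR (mul A X) (mul A Y) B).hom
      = mulHom (𝟙 A) (distR X Y B).hom ≫ (distL A (mul X B) (mul Y B)).hom
        ≫ addHom (aMul A X B).hom (aMul A Y B).hom
  ann13 : ∀ (A B X Y : C),
    (distL (add A B) X Y).hom ≫ addHom (distR A B X).hom (distR A B Y).hom
        ≫ ((aPlus (add (mul A X) (mul B X)) (mul A Y) (mul B Y)).hom
          ≫ addHom (aPlus (mul A X) (mul B X) (mul A Y)).inv (𝟙 (mul B Y))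
          ≫ addHom (addHom (𝟙 (mul A X)) (csym (mul B X) (mul A Y)).hom) (𝟙 (mul B Y))
          ≫ addHom (aPlus (mul A X) (mul A Y) (mul B X)).hom (𝟙 (mul B Y))
          ≫ (aPlus (add (mul A X) (mul A Y)) (mul B X) (mul B Y)).inv)
      = (distR A B (add X Y)).hom ≫ addHom (distL A X Y).hom (distL B X Y).hom
  -- (Ann-3)
  ann3l : ∀ (X Y : C),
    (distL one X Y).hom ≫ addHom (lu X).hom (lu Y).hom = (lu (add X Y)).hom
  ann3r : ∀ (X Y : C),
    (distR X Y one).hom ≫ addHom (ru X).hom (ru Y).hom = (ru (add X Y)).hom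

namespace AnnCat

variable {C : Type u} [Groupoid.{v} C] (S : AnnCat C)

/-- The defining property of `L̂^A : A ⊗ 0 → 0`:
`g_{A⊗X} ∘ (L̂^A ⊕ id_{A⊗X}) ∘ 𝔏_{A,0,X} = id_A ⊗ g_X` for all `X`. -/
def IsLhat (A : C) (f : S.mul A S.zero ⟶ S.zero) : Prop :=
  ∀ X : C, (S.distL A S.zero X).hom ≫ S.addHom f (𝟙 (S.mul A X)) ≫ (S.gl (S.mul A X)).hom
    = S.mulHom (𝟙 A) (S.gl X).hom

/-- The defining property of `R̂^A : 0 ⊗ A → 0`: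
`g_{X⊗A} ∘ (R̂^A ⊕ id_{X⊗A}) ∘ ℜ_{0,X,A} = g_X ⊗ id_A` for all `X`. -/
def IsRhat (A : C) (f : S.mul S.zero A ⟶ S.zero) : Prop :=
  ∀ X : C, (S.distR S.zero X A).hom ≫ S.addHom f (𝟙 (S.mul X A)) ≫ (S.gl (S.mul X A)).hom
    = S.mulHom (S.gl X).hom (𝟙 A)

end AnnCat

namespace AnnCat

variable {C : Type u} [Groupoid.{v} C] (S : AnnCat C)

instance addHom_isIso {X₁ Y₁ X₂ Y₂ : C} (f : X₁ ⟶ Y₁) (g : X₂ ⟶ Y₂) :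
    IsIso (S.addHom f g) :=
  ⟨⟨S.addHom (inv f) (inv g), by
      rw [← S.addHom_comp, IsIso.hom_inv_id, IsIso.hom_inv_id, S.addHom_id], by
      rw [← S.addHom_comp, IsIso.inv_hom_id, IsIso.inv_hom_id, S.addHom_id]⟩⟩

instance mulHom_isIso {X₁ Y₁ X₂ Y₂ : C} (f : X₁ ⟶ Y₁) (g : X₂ ⟶ Y₂) :
    IsIso (S.mulHom f g) :=
  ⟨⟨S.mulHom (inv f) (inv g), by
      rw [← S.mulHom_comp, IsIso.hom_inv_id, IsIso.hom_inv_id, S.mulHom_id], by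
      rw [← S.mulHom_comp, IsIso.inv_hom_id, IsIso.inv_hom_id, S.mulHom_id]⟩⟩

theorem addHom_split {X₁ Y₁ X₂ Y₂ : C} (f : X₁ ⟶ Y₁) (g : X₂ ⟶ Y₂) :
    S.addHom f g = S.addHom f (𝟙 X₂) ≫ S.addHom (𝟙 Y₁) g := by
  rw [← S.addHom_comp, Category.comp_id, Category.id_comp]

theorem addHom_split' {X₁ Y₁ X₂ Y₂ : C} (f : X₁ ⟶ Y₁) (g : X₂ ⟶ Y₂) :
    S.addHom f g = S.addHom (𝟙 X₁) g ≫ S.addHom f (𝟙 Y₂) := by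
  rw [← S.addHom_comp, Category.comp_id, Category.id_comp]

theorem aPlus_inv_natural {X X' Y Y' Z Z' : C} (f : X ⟶ X') (g : Y ⟶ Y') (h : Z ⟶ Z') :
    S.addHom (S.addHom f g) h ≫ (S.aPlus X' Y' Z').inv
      = (S.aPlus X Y Z).inv ≫ S.addHom f (S.addHom g h) := by
  rw [Iso.comp_inv_eq, Category.assoc, S.aPlus_natural, Iso.inv_hom_id_assoc]

theorem csym_inv {X Y : C} : (S.csym X Y).inv = (S.csym Y X).hom := by
  rw [← Category.comp_id (S.csym X Y).inv, ← S.csym_symm X Y, Iso.inv_hom_id_assoc]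

/-- conjugation description of `0 ⊕ -` -/
theorem addHom_id_zero_left {X Y : C} (f : X ⟶ Y) :
    S.addHom (𝟙 S.zero) f = (S.gl X).hom ≫ f ≫ (S.gl Y).inv := by
  rw [← Category.assoc, ← S.gl_natural f, Category.assoc, Iso.hom_inv_id, Category.comp_id]

theorem addHom_id_zero_right {X Y : C} (f : X ⟶ Y) :
    S.addHom f (𝟙 S.zero) = (S.dr X).hom ≫ f ≫ (S.dr Y).inv := by
  rw [← Category.assoc, ← S.dr_natural f, Category.assoc, Iso.hom_inv_id, Category.comp_id]

theorem cancel_add_left_zero {X Y : C} {u w : X ⟶ Y}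
    (h : S.addHom (𝟙 S.zero) u = S.addHom (𝟙 S.zero) w) : u = w := by
  rw [addHom_id_zero_left, addHom_id_zero_left] at h
  simpa using ((Iso.cancel_iso_hom_left (S.gl X) _ _).1 h)

theorem cancel_add_right_zero {X Y : C} {u w : X ⟶ Y}
    (h : S.addHom u (𝟙 S.zero) = S.addHom w (𝟙 S.zero)) : u = w := by
  rw [addHom_id_zero_right, addHom_id_zero_right] at h
  simpa using ((Iso.cancel_iso_hom_left (S.dr X) _ _).1 h)

/-- cancellation of `- ⊕ W` when `W` is isomorphic to `0` -/
theorem cancel_add_unit {W D E : C} (t : W ⟶ S.zero) {f f' : D ⟶ E}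
    (h : S.addHom f (𝟙 W) = S.addHom f' (𝟙 W)) : f = f' := by
  apply cancel_add_right_zero S
  have h2 : S.addHom f t = S.addHom f' t := by
    rw [addHom_split S f t, h, ← addHom_split S f' t]
  rw [addHom_split' S f t, addHom_split' S f' t] at h2
  exact (cancel_epi (S.addHom (𝟙 D) t)).1 h2

theorem addHom_comp_left {X Y Z W : C} (f : X ⟶ Y) (g : Y ⟶ Z) :
    S.addHom (f ≫ g) (𝟙 W) = S.addHom f (𝟙 W) ≫ S.addHom g (𝟙 W) := by
  have := S.addHom_comp f g (𝟙 W) (𝟙 W); simpa using this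

theorem addHom_comp_right {X Y Z W : C} (f : X ⟶ Y) (g : Y ⟶ Z) :
    S.addHom (𝟙 W) (f ≫ g) = S.addHom (𝟙 W) f ≫ S.addHom (𝟙 W) g := by
  have := S.addHom_comp (𝟙 W) (𝟙 W) f g; simpa using this

theorem mulHom_comp_left {X Y Z W : C} (f : X ⟶ Y) (g : Y ⟶ Z) :
    S.mulHom (f ≫ g) (𝟙 W) = S.mulHom f (𝟙 W) ≫ S.mulHom g (𝟙 W) := by
  have := S.mulHom_comp f g (𝟙 W) (𝟙 W); simpa using this

theorem mulHom_comp_right {X Y Z W : C} (f : X ⟶ Y) (g : Y ⟶ Z) :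
    S.mulHom (𝟙 W) (f ≫ g) = S.mulHom (𝟙 W) f ≫ S.mulHom (𝟙 W) g := by
  have := S.mulHom_comp (𝟙 W) (𝟙 W) f g; simpa using this

/-- `λ`-tensor lemma: `a⁺ ≫ (g_X ⊕ 1) = g_{X⊕Y}` -/
theorem gl_add (X Y : C) :
    (S.aPlus S.zero X Y).hom ≫ S.addHom (S.gl X).hom (𝟙 Y)
      = (S.gl (S.add X Y)).hom := by
  apply cancel_add_left_zero S
  have key : S.addHom (𝟙 S.zero) (S.aPlus S.zero X Y).hom
      ≫ (S.aPlus S.zero (S.add S.zero X) Y).hom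
      ≫ S.addHom (S.addHom (𝟙 S.zero) (S.gl X).hom) (𝟙 Y)
      ≫ (S.aPlus S.zero X Y).inv
      = S.addHom (𝟙 S.zero) (S.gl (S.add X Y)).hom := by
    rw [← S.add_triangle S.zero X, addHom_comp_left]
    slice_lhs 1 3 => rw [S.add_pentagon]
    slice_lhs 2 3 => rw [← S.aPlus_natural (S.dr S.zero).hom (𝟙 X) (𝟙 Y)]
    slice_lhs 3 4 => rw [Iso.hom_inv_id]
    rw [Category.comp_id, S.addHom_id, S.add_triangle]
  rw [← key]
  slice_rhs 2 3 => rw [← S.aPlus_natural (𝟙 S.zero) (S.gl X).hom (𝟙 Y)]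
  slice_rhs 3 4 => rw [Iso.hom_inv_id]
  rw [Category.comp_id, ← addHom_comp_right]

/-- `ρ`-tensor lemma: `a⁺ ≫ d_{X⊕Y} = 1 ⊕ d_Y` -/
theorem dr_add (X Y : C) :
    (S.aPlus X Y S.zero).hom ≫ (S.dr (S.add X Y)).hom
      = S.addHom (𝟙 X) (S.dr Y).hom := by
  apply cancel_add_right_zero S
  have e1 : S.addHom (S.dr (S.add X Y)).hom (𝟙 S.zero)
      = (S.aPlus (S.add X Y) S.zero S.zero).inv
        ≫ S.addHom (𝟙 (S.add X Y)) (S.gl S.zero).hom := by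
    rw [Iso.eq_inv_comp, S.add_triangle]
  have e2 : S.addHom (S.dr Y).hom (𝟙 S.zero)
      = (S.aPlus Y S.zero S.zero).inv ≫ S.addHom (𝟙 Y) (S.gl S.zero).hom := by
    rw [Iso.eq_inv_comp, S.add_triangle]
  rw [addHom_comp_left, e1]
  have e3 : S.addHom (S.aPlus X Y S.zero).hom (𝟙 S.zero)
        ≫ (S.aPlus (S.add X Y) S.zero S.zero).inv
      = (S.aPlus X (S.add Y S.zero) S.zero).inv
        ≫ S.addHom (𝟙 X) (S.aPlus Y S.zero S.zero).inv
        ≫ (S.aPlus X Y (S.add S.zero S.zero)).hom := by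
    rw [Iso.comp_inv_eq, Category.assoc, Category.assoc, ← S.add_pentagon X Y S.zero S.zero]
    slice_rhs 2 3 => rw [← addHom_comp_right, Iso.inv_hom_id, S.addHom_id]
    rw [Category.id_comp, Iso.inv_hom_id_assoc]
  rw [← Category.assoc, e3]
  slice_lhs 3 4 => rw [← S.addHom_id X Y, ← S.aPlus_natural (𝟙 X) (𝟙 Y) (S.gl S.zero).hom]
  slice_lhs 2 3 => rw [← addHom_comp_right]
  rw [← e2, S.aPlus_natural (𝟙 X) (S.dr Y).hom (𝟙 S.zero), Iso.inv_hom_id_assoc]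

theorem csym_zero_aux (X : C) :
    (S.aPlus X S.zero S.zero).hom ≫ S.addHom (S.csym S.zero X).inv (𝟙 S.zero)
        ≫ (S.aPlus S.zero X S.zero).inv ≫ S.addHom (𝟙 S.zero) (S.dr X).hom
      = S.addHom (𝟙 X) (S.dr S.zero).hom ≫ (S.csym S.zero X).inv := by
  have h1 : (S.aPlus S.zero X S.zero).inv ≫ S.addHom (𝟙 S.zero) (S.dr X).hom
      = (S.dr (S.add S.zero X)).hom := by
    rw [Iso.inv_comp_eq, dr_add]
  have h2 : S.addHom (𝟙 X) (S.dr S.zero).hom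
      = (S.aPlus X S.zero S.zero).hom ≫ (S.dr (S.add X S.zero)).hom := by
    rw [dr_add]
  rw [h1, h2, Category.assoc]
  congr 1
  exact S.dr_natural (S.csym S.zero X).inv

/-- braided-unit lemma: `c_{0,X} ≫ d_X = g_X` -/
theorem csym_zero_dr (X : C) :
    (S.csym S.zero X).hom ≫ (S.dr X).hom = (S.gl X).hom := by
  apply cancel_add_left_zero S
  rw [addHom_comp_right]
  calc S.addHom (𝟙 S.zero) (S.csym S.zero X).hom ≫ S.addHom (𝟙 S.zero) (S.dr X).hom
      = S.addHom (𝟙 S.zero) (S.csym S.zero X).hom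
          ≫ (S.aPlus S.zero X S.zero).hom
          ≫ S.addHom (S.csym S.zero X).hom (𝟙 S.zero)
          ≫ S.addHom (S.csym S.zero X).inv (𝟙 S.zero)
          ≫ (S.aPlus S.zero X S.zero).inv
          ≫ S.addHom (𝟙 S.zero) (S.dr X).hom := by
        slice_rhs 3 4 => rw [← addHom_comp_left, Iso.hom_inv_id, S.addHom_id]
        simp only [Category.id_comp, Category.comp_id]
        slice_rhs 2 3 => rw [Iso.hom_inv_id]
        simp only [Category.id_comp, Category.comp_id]
    _ = (S.aPlus S.zero S.zero X).hom ≫ (S.csym (S.add S.zero S.zero) X).hom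
          ≫ (S.aPlus X S.zero S.zero).hom
          ≫ S.addHom (S.csym S.zero X).inv (𝟙 S.zero)
          ≫ (S.aPlus S.zero X S.zero).inv
          ≫ S.addHom (𝟙 S.zero) (S.dr X).hom := by
        slice_lhs 1 3 => rw [← S.add_hexagon]
        simp only [Category.assoc]
    _ = (S.aPlus S.zero S.zero X).hom ≫ (S.csym (S.add S.zero S.zero) X).hom
          ≫ (S.addHom (𝟙 X) (S.dr S.zero).hom ≫ (S.csym S.zero X).inv) := by
        rw [csym_zero_aux]
    _ = (S.aPlus S.zero S.zero X).hom ≫ S.addHom (S.dr S.zero).hom (𝟙 X)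
          ≫ (S.csym S.zero X).hom ≫ (S.csym S.zero X).inv := by
        slice_lhs 2 3 => rw [← S.csym_natural (S.dr S.zero).hom (𝟙 X)]
        simp only [Category.assoc]
    _ = S.addHom (𝟙 S.zero) (S.gl X).hom := by
        rw [Iso.hom_inv_id, Category.comp_id, S.add_triangle]

/-- braided-unit lemma: `c_{X,0} ≫ g_X = d_X` -/
theorem csym_dr_gl (X : C) :
    (S.csym X S.zero).hom ≫ (S.gl X).hom = (S.dr X).hom := by
  rw [← csym_zero_dr S X, ← Category.assoc, S.csym_symm, Category.id_comp]

/-- the middle-four interchange `v` -/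
def vmap (U V Z T : C) : S.add (S.add U V) (S.add Z T) ⟶ S.add (S.add U Z) (S.add V T) :=
  (S.aPlus (S.add U V) Z T).hom ≫ S.addHom (S.aPlus U V Z).inv (𝟙 T)
    ≫ S.addHom (S.addHom (𝟙 U) (S.csym V Z).hom) (𝟙 T)
    ≫ S.addHom (S.aPlus U Z V).hom (𝟙 T) ≫ (S.aPlus (S.add U Z) V T).inv

theorem v_natural {U V Z T U' V' Z' T' : C}
    (f1 : U ⟶ U') (f2 : V ⟶ V') (f3 : Z ⟶ Z') (f4 : T ⟶ T') :
    S.addHom (S.addHom f1 f2) (S.addHom f3 f4) ≫ vmap S U' V' Z' T'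
      = vmap S U V Z T ≫ S.addHom (S.addHom f1 f3) (S.addHom f2 f4) := by
  unfold vmap
  slice_lhs 1 2 => rw [S.aPlus_natural (S.addHom f1 f2) f3 f4]
  have h2 : S.addHom (S.addHom (S.addHom f1 f2) f3) f4
        ≫ S.addHom (S.aPlus U' V' Z').inv (𝟙 T')
      = S.addHom (S.aPlus U V Z).inv (𝟙 T)
        ≫ S.addHom (S.addHom f1 (S.addHom f2 f3)) f4 := by
    rw [← S.addHom_comp, ← S.addHom_comp, Category.comp_id, Category.id_comp,
      aPlus_inv_natural]
  slice_lhs 2 3 => rw [h2]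
  have h3 : S.addHom (S.addHom f1 (S.addHom f2 f3)) f4
        ≫ S.addHom (S.addHom (𝟙 U') (S.csym V' Z').hom) (𝟙 T')
      = S.addHom (S.addHom (𝟙 U) (S.csym V Z).hom) (𝟙 T)
        ≫ S.addHom (S.addHom f1 (S.addHom f3 f2)) f4 := by
    calc S.addHom (S.addHom f1 (S.addHom f2 f3)) f4
          ≫ S.addHom (S.addHom (𝟙 U') (S.csym V' Z').hom) (𝟙 T')
        = S.addHom (S.addHom f1 (S.addHom f2 f3 ≫ (S.csym V' Z').hom)) f4 := by
          rw [← S.addHom_comp, ← S.addHom_comp]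
          simp only [Category.comp_id, Category.id_comp]
      _ = S.addHom (S.addHom f1 ((S.csym V Z).hom ≫ S.addHom f3 f2)) f4 := by
          rw [S.csym_natural]
      _ = S.addHom (S.addHom (𝟙 U) (S.csym V Z).hom) (𝟙 T)
            ≫ S.addHom (S.addHom f1 (S.addHom f3 f2)) f4 := by
          rw [← S.addHom_comp, ← S.addHom_comp]
          simp only [Category.comp_id, Category.id_comp]
  slice_lhs 3 4 => rw [h3]
  have h4 : S.addHom (S.addHom f1 (S.addHom f3 f2)) f4
        ≫ S.addHom (S.aPlus U' Z' V').hom (𝟙 T')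
      = S.addHom (S.aPlus U Z V).hom (𝟙 T)
        ≫ S.addHom (S.addHom (S.addHom f1 f3) f2) f4 := by
    rw [← S.addHom_comp, ← S.addHom_comp, Category.comp_id, Category.id_comp,
      S.aPlus_natural]
  slice_lhs 4 5 => rw [h4]
  slice_lhs 5 6 => rw [aPlus_inv_natural]
  simp only [Category.assoc]

/-- coherence: `v_{0,V,0,T}` against units -/
theorem v_zero_left (V T : C) :
    vmap S S.zero V S.zero T ≫ S.addHom (S.gl S.zero).hom (𝟙 (S.add V T))
        ≫ (S.gl (S.add V T)).hom
      = S.addHom (S.gl V).hom (S.gl T).hom := by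
  unfold vmap
  have ha : (S.aPlus (S.add S.zero S.zero) V T).inv
        ≫ S.addHom (S.gl S.zero).hom (𝟙 (S.add V T))
      = S.addHom (S.addHom (S.gl S.zero).hom (𝟙 V)) (𝟙 T) ≫ (S.aPlus S.zero V T).inv := by
    rw [Iso.inv_comp_eq, ← Category.assoc, ← S.aPlus_natural (S.gl S.zero).hom (𝟙 V) (𝟙 T),
      S.addHom_id, Category.assoc, Iso.hom_inv_id, Category.comp_id]
  have hb : (S.aPlus S.zero V T).inv ≫ (S.gl (S.add V T)).hom
      = S.addHom (S.gl V).hom (𝟙 T) := by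
    rw [Iso.inv_comp_eq, gl_add]
  slice_lhs 5 6 => rw [ha]
  slice_lhs 6 7 => rw [hb]
  slice_lhs 4 5 => rw [← addHom_comp_left, gl_add S S.zero V]
  slice_lhs 3 4 => rw [← addHom_comp_left, S.gl_natural (S.csym V S.zero).hom]
  slice_lhs 3 5 => rw [← addHom_comp_left, Category.assoc, csym_dr_gl S V]
  have hc : (S.aPlus S.zero V S.zero).inv ≫ (S.gl (S.add V S.zero)).hom ≫ (S.dr V).hom
      = (S.dr (S.add S.zero V)).hom ≫ (S.gl V).hom := by
    rw [Iso.inv_comp_eq, ← S.dr_natural (S.gl V).hom, ← Category.assoc, gl_add S V S.zero]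
  slice_lhs 2 3 => rw [← addHom_comp_left, hc]
  rw [addHom_comp_left, ← Category.assoc, S.add_triangle,
    ← S.addHom_comp, Category.id_comp, Category.comp_id]

/-- coherence: `v_{0,0,Z,T}` against units -/
theorem v_zero_right (Z T : C) :
    vmap S S.zero S.zero Z T ≫ S.addHom (S.gl Z).hom (S.gl T).hom
      = S.addHom (S.gl S.zero).hom (𝟙 (S.add Z T)) ≫ (S.gl (S.add Z T)).hom := by
  unfold vmap
  rw [addHom_split' S (S.gl Z).hom (S.gl T).hom]
  have ha : (S.aPlus (S.add S.zero Z) S.zero T).inv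
        ≫ S.addHom (𝟙 (S.add S.zero Z)) (S.gl T).hom
      = S.addHom (S.dr (S.add S.zero Z)).hom (𝟙 T) := by
    rw [Iso.inv_comp_eq, S.add_triangle]
  slice_lhs 5 6 => rw [ha]
  have hb : (S.aPlus S.zero Z S.zero).hom ≫ (S.dr (S.add S.zero Z)).hom ≫ (S.gl Z).hom
      = (S.gl (S.add Z S.zero)).hom ≫ (S.dr Z).hom := by
    rw [← S.dr_natural (S.gl Z).hom, ← Category.assoc, gl_add S Z S.zero]
  slice_lhs 4 6 => rw [← addHom_comp_left, ← addHom_comp_left, hb]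
  slice_lhs 3 4 => rw [← addHom_comp_left, ← Category.assoc,
    S.gl_natural (S.csym S.zero Z).hom, Category.assoc, csym_zero_dr S Z]
  have hd : (S.aPlus S.zero S.zero Z).inv ≫ (S.gl (S.add S.zero Z)).hom ≫ (S.gl Z).hom
      = S.addHom (S.gl S.zero).hom (𝟙 Z) ≫ (S.gl Z).hom := by
    rw [Iso.inv_comp_eq, ← Category.assoc, gl_add S S.zero Z]
  slice_lhs 2 3 => rw [← addHom_comp_left, hd]
  rw [addHom_comp_left]
  slice_lhs 1 2 => rw [← S.aPlus_natural (S.gl S.zero).hom (𝟙 Z) (𝟙 T)]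
  slice_lhs 2 3 => rw [gl_add S Z T]
  rw [S.addHom_id]

theorem v_push_left {U V Z T : C} (p : U ⟶ S.zero) (q : Z ⟶ S.zero) :
    vmap S U V Z T
        ≫ S.addHom (S.addHom p q ≫ (S.gl S.zero).hom) (𝟙 (S.add V T))
        ≫ (S.gl (S.add V T)).hom
      = S.addHom (S.addHom p (𝟙 V) ≫ (S.gl V).hom) (S.addHom q (𝟙 T) ≫ (S.gl T).hom) := by
  have e : S.addHom (S.addHom p q ≫ (S.gl S.zero).hom) (𝟙 (S.add V T))
      = S.addHom (S.addHom p q) (S.addHom (𝟙 V) (𝟙 T))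
        ≫ S.addHom (S.gl S.zero).hom (𝟙 (S.add V T)) := by
    rw [S.addHom_id, ← addHom_comp_left]
  rw [e]
  simp only [← Category.assoc]
  rw [← v_natural S p (𝟙 V) q (𝟙 T)]
  simp only [Category.assoc]
  rw [v_zero_left, ← S.addHom_comp]

theorem v_push_right {U V Z T : C} (p : U ⟶ S.zero) (q : V ⟶ S.zero) :
    vmap S U V Z T
        ≫ S.addHom (S.addHom p (𝟙 Z) ≫ (S.gl Z).hom) (S.addHom q (𝟙 T) ≫ (S.gl T).hom)
      = S.addHom (S.addHom p q ≫ (S.gl S.zero).hom) (𝟙 (S.add Z T))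
        ≫ (S.gl (S.add Z T)).hom := by
  rw [S.addHom_comp]
  simp only [← Category.assoc]
  rw [← v_natural S p q (𝟙 Z) (𝟙 T)]
  simp only [Category.assoc]
  rw [v_zero_right, S.addHom_id, ← Category.assoc, ← addHom_comp_left]

theorem lhat_unique {A : C} {f f' : S.mul A S.zero ⟶ S.zero}
    (h : S.IsLhat A f) (h' : S.IsLhat A f') : f = f' := by
  have e : (S.distL A S.zero S.zero).hom ≫ S.addHom f (𝟙 (S.mul A S.zero))
        ≫ (S.gl (S.mul A S.zero)).hom
      = (S.distL A S.zero S.zero).hom ≫ S.addHom f' (𝟙 (S.mul A S.zero))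
        ≫ (S.gl (S.mul A S.zero)).hom := (h S.zero).trans (h' S.zero).symm
  have e2 := (cancel_epi (S.distL A S.zero S.zero).hom).1 e
  have e3 := (cancel_mono (S.gl (S.mul A S.zero)).hom).1 e2
  exact cancel_add_unit S f e3

theorem rhat_unique {A : C} {f f' : S.mul S.zero A ⟶ S.zero}
    (h : S.IsRhat A f) (h' : S.IsRhat A f') : f = f' := by
  have e : (S.distR S.zero S.zero A).hom ≫ S.addHom f (𝟙 (S.mul S.zero A))
        ≫ (S.gl (S.mul S.zero A)).hom
      = (S.distR S.zero S.zero A).hom ≫ S.addHom f' (𝟙 (S.mul S.zero A))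
        ≫ (S.gl (S.mul S.zero A)).hom := (h S.zero).trans (h' S.zero).symm
  have e2 := (cancel_epi (S.distR S.zero S.zero A).hom).1 e
  have e3 := (cancel_mono (S.gl (S.mul S.zero A)).hom).1 e2
  exact cancel_add_unit S f e3

/-- `l_0` is an `L̂` for the unit object -/
theorem isLhat_lu : S.IsLhat S.one (S.lu S.zero).hom := by
  intro X
  rw [← cancel_mono (S.lu X).hom, Category.assoc, Category.assoc, S.lu_natural (S.gl X).hom]
  slice_lhs 3 4 => rw [← S.gl_natural (S.lu X).hom]
  slice_lhs 2 3 => rw [← S.addHom_comp, Category.comp_id, Category.id_comp]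
  slice_lhs 1 2 => rw [S.ann3l]

/-- `r_0` is an `R̂` for the unit object -/
theorem isRhat_ru : S.IsRhat S.one (S.ru S.zero).hom := by
  intro X
  rw [← cancel_mono (S.ru X).hom, Category.assoc, Category.assoc, S.ru_natural (S.gl X).hom]
  slice_lhs 3 4 => rw [← S.gl_natural (S.ru X).hom]
  slice_lhs 2 3 => rw [← S.addHom_comp, Category.comp_id, Category.id_comp]
  slice_lhs 1 2 => rw [S.ann3r]

/-- `R̂` for a product (K15 candidate) -/
theorem isRhat_mul {A B : C} {yA : S.mul S.zero A ⟶ S.zero} {yB : S.mul S.zero B ⟶ S.zero}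
    (hA : S.IsRhat A yA) (hB : S.IsRhat B yB) :
    S.IsRhat (S.mul A B) ((S.aMul S.zero A B).hom ≫ S.mulHom yA (𝟙 B) ≫ yB) := by
  intro X
  rw [← cancel_mono (S.aMul X A B).hom]
  have hR : S.mulHom (S.gl X).hom (𝟙 (S.mul A B)) ≫ (S.aMul X A B).hom
      = (S.aMul (S.add S.zero X) A B).hom
        ≫ S.mulHom (S.mulHom (S.gl X).hom (𝟙 A)) (𝟙 B) := by
    rw [← S.mulHom_id A B, S.aMul_natural (S.gl X).hom (𝟙 A) (𝟙 B)]
  simp only [Category.assoc]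
  rw [hR, ← S.gl_natural (S.aMul X A B).hom]
  have hsplit : S.addHom ((S.aMul S.zero A B).hom ≫ S.mulHom yA (𝟙 B) ≫ yB)
        (𝟙 (S.mul X (S.mul A B))) ≫ S.addHom (𝟙 S.zero) (S.aMul X A B).hom
      = S.addHom (S.aMul S.zero A B).hom (S.aMul X A B).hom
        ≫ S.addHom (S.mulHom yA (𝟙 B) ≫ yB) (𝟙 (S.mul (S.mul X A) B)) := by
    rw [← S.addHom_comp, ← S.addHom_comp]
    simp only [Category.comp_id, Category.id_comp]
  rw [reassoc_of% hsplit, ← reassoc_of% (S.ann11' S.zero X A B), addHom_comp_left]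
  simp only [Category.assoc]
  have hn : (S.distR (S.mul S.zero A) (S.mul X A) B).hom
        ≫ S.addHom (S.mulHom yA (𝟙 B)) (𝟙 (S.mul (S.mul X A) B))
      = S.mulHom (S.addHom yA (𝟙 (S.mul X A))) (𝟙 B)
        ≫ (S.distR S.zero (S.mul X A) B).hom := by
    rw [S.distR_natural yA (𝟙 (S.mul X A)) (𝟙 B), S.mulHom_id]
  rw [reassoc_of% hn, hB (S.mul X A)]
  have hm : S.mulHom (S.distR S.zero X A).hom (𝟙 B)
        ≫ S.mulHom (S.addHom yA (𝟙 (S.mul X A))) (𝟙 B)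
        ≫ S.mulHom (S.gl (S.mul X A)).hom (𝟙 B)
      = S.mulHom (S.mulHom (S.gl X).hom (𝟙 A)) (𝟙 B) := by
    rw [← mulHom_comp_left, ← mulHom_comp_left, hA X]
  rw [hm]

/-- `L̂` for a product (K16 second candidate) -/
theorem isLhat_mul {A B : C} {xA : S.mul A S.zero ⟶ S.zero} {xB : S.mul B S.zero ⟶ S.zero}
    (hA : S.IsLhat A xA) (hB : S.IsLhat B xB) :
    S.IsLhat (S.mul A B) ((S.aMul A B S.zero).inv ≫ S.mulHom (𝟙 A) xB ≫ xA) := by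
  intro X
  rw [← cancel_epi (S.aMul A B (S.add S.zero X)).hom]
  have hR : (S.aMul A B (S.add S.zero X)).hom ≫ S.mulHom (𝟙 (S.mul A B)) (S.gl X).hom
      = S.mulHom (𝟙 A) (S.mulHom (𝟙 B) (S.gl X).hom) ≫ (S.aMul A B X).hom := by
    rw [← S.mulHom_id A B, S.aMul_natural (𝟙 A) (𝟙 B) (S.gl X).hom]
  rw [hR, ← reassoc_of% (S.ann11 A B S.zero X)]
  have hm : S.addHom (S.aMul A B S.zero).hom (S.aMul A B X).hom
        ≫ S.addHom ((S.aMul A B S.zero).inv ≫ S.mulHom (𝟙 A) xB ≫ xA)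
            (𝟙 (S.mul (S.mul A B) X))
      = S.addHom (S.mulHom (𝟙 A) xB) (𝟙 (S.mul A (S.mul B X)))
        ≫ S.addHom xA (𝟙 (S.mul A (S.mul B X)))
        ≫ S.addHom (𝟙 S.zero) (S.aMul A B X).hom := by
    rw [← S.addHom_comp, Iso.hom_inv_id_assoc, ← S.addHom_comp, ← S.addHom_comp]
    simp only [Category.comp_id, Category.id_comp]
  rw [reassoc_of% hm]
  have hd : (S.distL A (S.mul B S.zero) (S.mul B X)).hom
        ≫ S.addHom (S.mulHom (𝟙 A) xB) (𝟙 (S.mul A (S.mul B X)))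
      = S.mulHom (𝟙 A) (S.addHom xB (𝟙 (S.mul B X)))
        ≫ (S.distL A S.zero (S.mul B X)).hom := by
    rw [S.distL_natural (𝟙 A) xB (𝟙 (S.mul B X)), S.mulHom_id]
  rw [reassoc_of% hd, S.gl_natural (S.aMul A B X).hom, reassoc_of% (hA (S.mul B X))]
  have hc : S.mulHom (𝟙 A) (S.distL B S.zero X).hom
        ≫ S.mulHom (𝟙 A) (S.addHom xB (𝟙 (S.mul B X)))
        ≫ S.mulHom (𝟙 A) (S.gl (S.mul B X)).hom
      = S.mulHom (𝟙 A) (S.mulHom (𝟙 B) (S.gl X).hom) := by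
    rw [← mulHom_comp_right, ← mulHom_comp_right, hB X]
  rw [reassoc_of% hc]

theorem v_push_left' {U V Z T : C} (p : U ⟶ S.zero) (q : Z ⟶ S.zero) :
    (S.aPlus (S.add U V) Z T).hom ≫ S.addHom (S.aPlus U V Z).inv (𝟙 T)
        ≫ S.addHom (S.addHom (𝟙 U) (S.csym V Z).hom) (𝟙 T)
        ≫ S.addHom (S.aPlus U Z V).hom (𝟙 T) ≫ (S.aPlus (S.add U Z) V T).inv
        ≫ S.addHom (S.addHom p q ≫ (S.gl S.zero).hom) (𝟙 (S.add V T))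
        ≫ (S.gl (S.add V T)).hom
      = S.addHom (S.addHom p (𝟙 V) ≫ (S.gl V).hom) (S.addHom q (𝟙 T) ≫ (S.gl T).hom) := by
  have h := v_push_left S (V := V) (T := T) p q
  unfold vmap at h
  simpa only [Category.assoc] using h

theorem v_push_right' {U V Z T : C} (p : U ⟶ S.zero) (q : V ⟶ S.zero) :
    (S.aPlus (S.add U V) Z T).hom ≫ S.addHom (S.aPlus U V Z).inv (𝟙 T)
        ≫ S.addHom (S.addHom (𝟙 U) (S.csym V Z).hom) (𝟙 T)
        ≫ S.addHom (S.aPlus U Z V).hom (𝟙 T) ≫ (S.aPlus (S.add U Z) V T).inv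
        ≫ S.addHom (S.addHom p (𝟙 Z) ≫ (S.gl Z).hom) (S.addHom q (𝟙 T) ≫ (S.gl T).hom)
      = S.addHom (S.addHom p q ≫ (S.gl S.zero).hom) (𝟙 (S.add Z T))
        ≫ (S.gl (S.add Z T)).hom := by
  have h := v_push_right S (Z := Z) (T := T) p q
  unfold vmap at h
  simpa only [Category.assoc] using h

/-- `R̂` for a sum (K11 candidate) -/
theorem isRhat_add {A B : C} {yA : S.mul S.zero A ⟶ S.zero} {yB : S.mul S.zero B ⟶ S.zero}
    (hA : S.IsRhat A yA) (hB : S.IsRhat B yB) :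
    S.IsRhat (S.add A B)
      ((S.distL S.zero A B).hom ≫ S.addHom yA yB ≫ (S.gl S.zero).hom) := by
  intro X
  have hsplit : S.addHom
        ((S.distL S.zero A B).hom ≫ S.addHom yA yB ≫ (S.gl S.zero).hom)
        (𝟙 (S.mul X (S.add A B)))
      = S.addHom (S.distL S.zero A B).hom (S.distL X A B).hom
        ≫ S.addHom (S.addHom yA yB ≫ (S.gl S.zero).hom)
            (𝟙 (S.add (S.mul X A) (S.mul X B)))
        ≫ S.addHom (𝟙 S.zero) (S.distL X A B).inv := by
    rw [← S.addHom_comp, ← S.addHom_comp]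
    simp only [Category.comp_id, Category.id_comp, Category.assoc, Iso.hom_inv_id]
  rw [hsplit]
  simp only [Category.assoc]
  rw [S.gl_natural (S.distL X A B).inv, ← reassoc_of% (S.ann13 S.zero X A B),
    reassoc_of% (v_push_left' S yA yB)]
  have hmerge : S.addHom (S.distR S.zero X A).hom (S.distR S.zero X B).hom
        ≫ S.addHom (S.addHom yA (𝟙 (S.mul X A)) ≫ (S.gl (S.mul X A)).hom)
            (S.addHom yB (𝟙 (S.mul X B)) ≫ (S.gl (S.mul X B)).hom)
      = S.addHom (S.mulHom (S.gl X).hom (𝟙 A)) (S.mulHom (S.gl X).hom (𝟙 B)) := by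
    rw [← S.addHom_comp, hA X, hB X]
  rw [reassoc_of% hmerge]
  have hfin : (S.distL (S.add S.zero X) A B).hom
        ≫ S.addHom (S.mulHom (S.gl X).hom (𝟙 A)) (S.mulHom (S.gl X).hom (𝟙 B))
      = S.mulHom (S.gl X).hom (𝟙 (S.add A B)) ≫ (S.distL X A B).hom := by
    rw [← S.addHom_id A B, S.distL_natural (S.gl X).hom (𝟙 A) (𝟙 B)]
  rw [reassoc_of% hfin, Iso.hom_inv_id, Category.comp_id]

/-- `L̂` for a sum (K12 candidate) -/
theorem isLhat_add {A B : C} {xA : S.mul A S.zero ⟶ S.zero} {xB : S.mul B S.zero ⟶ S.zero}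
    (hA : S.IsLhat A xA) (hB : S.IsLhat B xB) :
    S.IsLhat (S.add A B)
      ((S.distR A B S.zero).hom ≫ S.addHom xA xB ≫ (S.gl S.zero).hom) := by
  intro X
  have hsplit : S.addHom
        ((S.distR A B S.zero).hom ≫ S.addHom xA xB ≫ (S.gl S.zero).hom)
        (𝟙 (S.mul (S.add A B) X))
      = S.addHom (S.distR A B S.zero).hom (S.distR A B X).hom
        ≫ S.addHom (S.addHom xA xB ≫ (S.gl S.zero).hom)
            (𝟙 (S.add (S.mul A X) (S.mul B X)))
        ≫ S.addHom (𝟙 S.zero) (S.distR A B X).inv := by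
    rw [← S.addHom_comp, ← S.addHom_comp]
    simp only [Category.comp_id, Category.id_comp, Category.assoc, Iso.hom_inv_id]
  rw [hsplit]
  simp only [Category.assoc]
  rw [S.gl_natural (S.distR A B X).inv, ← reassoc_of% (v_push_right' S xA xB),
    reassoc_of% (S.ann13 A B S.zero X)]
  have hmerge : S.addHom (S.distL A S.zero X).hom (S.distL B S.zero X).hom
        ≫ S.addHom (S.addHom xA (𝟙 (S.mul A X)) ≫ (S.gl (S.mul A X)).hom)
            (S.addHom xB (𝟙 (S.mul B X)) ≫ (S.gl (S.mul B X)).hom)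
      = S.addHom (S.mulHom (𝟙 A) (S.gl X).hom) (S.mulHom (𝟙 B) (S.gl X).hom) := by
    rw [← S.addHom_comp, hA X, hB X]
  rw [reassoc_of% hmerge]
  have hfin : (S.distR A B (S.add S.zero X)).hom
        ≫ S.addHom (S.mulHom (𝟙 A) (S.gl X).hom) (S.mulHom (𝟙 B) (S.gl X).hom)
      = S.mulHom (𝟙 (S.add A B)) (S.gl X).hom ≫ (S.distR A B X).hom := by
    rw [← S.addHom_id A B, S.distR_natural (𝟙 A) (𝟙 B) (S.gl X).hom]
  rw [reassoc_of% hfin, Iso.hom_inv_id, Category.comp_id]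

theorem k16_aux1 {A B : C} {xA : S.mul A S.zero ⟶ S.zero} {yB : S.mul S.zero B ⟶ S.zero}
    (hA : S.IsLhat A xA) (hB : S.IsRhat B yB) (Y : C) :
    S.mulHom (𝟙 A) (S.distR S.zero Y B).hom
        ≫ (S.distL A (S.mul S.zero B) (S.mul Y B)).hom
        ≫ S.addHom (S.mulHom (𝟙 A) yB ≫ xA) (𝟙 (S.mul A (S.mul Y B)))
        ≫ (S.gl (S.mul A (S.mul Y B))).hom
      = S.mulHom (𝟙 A) (S.mulHom (S.gl Y).hom (𝟙 B)) := by
  rw [addHom_comp_left]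
  simp only [Category.assoc]
  have hd : (S.distL A (S.mul S.zero B) (S.mul Y B)).hom
        ≫ S.addHom (S.mulHom (𝟙 A) yB) (𝟙 (S.mul A (S.mul Y B)))
      = S.mulHom (𝟙 A) (S.addHom yB (𝟙 (S.mul Y B)))
        ≫ (S.distL A S.zero (S.mul Y B)).hom := by
    rw [S.distL_natural (𝟙 A) yB (𝟙 (S.mul Y B)), S.mulHom_id]
  rw [reassoc_of% hd, hA (S.mul Y B), ← mulHom_comp_right, ← mulHom_comp_right, hB Y]

theorem k16_aux2 {A B : C} {xA : S.mul A S.zero ⟶ S.zero} {yB : S.mul S.zero B ⟶ S.zero}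
    (hA : S.IsLhat A xA) (hB : S.IsRhat B yB) (Y : C) :
    S.mulHom (𝟙 A) (S.distR S.zero Y B).hom
        ≫ (S.distL A (S.mul S.zero B) (S.mul Y B)).hom
        ≫ S.addHom ((S.aMul A S.zero B).hom ≫ S.mulHom xA (𝟙 B) ≫ yB)
            (𝟙 (S.mul A (S.mul Y B)))
        ≫ (S.gl (S.mul A (S.mul Y B))).hom
      = S.mulHom (𝟙 A) (S.mulHom (S.gl Y).hom (𝟙 B)) := by
  have hsplit : S.addHom ((S.aMul A S.zero B).hom ≫ S.mulHom xA (𝟙 B) ≫ yB)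
        (𝟙 (S.mul A (S.mul Y B)))
      = S.addHom (S.aMul A S.zero B).hom (S.aMul A Y B).hom
        ≫ S.addHom (S.mulHom xA (𝟙 B) ≫ yB) (𝟙 (S.mul (S.mul A Y) B))
        ≫ S.addHom (𝟙 S.zero) (S.aMul A Y B).inv := by
    rw [← S.addHom_comp, ← S.addHom_comp]
    simp only [Category.comp_id, Category.id_comp, Category.assoc, Iso.hom_inv_id]
  rw [hsplit]
  simp only [Category.assoc]
  rw [S.gl_natural (S.aMul A Y B).inv, ← reassoc_of% (S.ann12 A S.zero Y B),
    addHom_comp_left]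
  simp only [Category.assoc]
  have hd2 : (S.distR (S.mul A S.zero) (S.mul A Y) B).hom
        ≫ S.addHom (S.mulHom xA (𝟙 B)) (𝟙 (S.mul (S.mul A Y) B))
      = S.mulHom (S.addHom xA (𝟙 (S.mul A Y))) (𝟙 B)
        ≫ (S.distR S.zero (S.mul A Y) B).hom := by
    rw [S.distR_natural xA (𝟙 (S.mul A Y)) (𝟙 B), S.mulHom_id]
  rw [reassoc_of% hd2, reassoc_of% (hB (S.mul A Y))]
  have hm : S.mulHom (S.distL A S.zero Y).hom (𝟙 B)
        ≫ S.mulHom (S.addHom xA (𝟙 (S.mul A Y))) (𝟙 B)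
        ≫ S.mulHom (S.gl (S.mul A Y)).hom (𝟙 B)
      = S.mulHom (S.mulHom (𝟙 A) (S.gl Y).hom) (𝟙 B) := by
    rw [← mulHom_comp_left, ← mulHom_comp_left, hA Y]
  rw [reassoc_of% hm]
  have hn : (S.aMul A (S.add S.zero Y) B).hom
        ≫ S.mulHom (S.mulHom (𝟙 A) (S.gl Y).hom) (𝟙 B)
      = S.mulHom (𝟙 A) (S.mulHom (S.gl Y).hom (𝟙 B)) ≫ (S.aMul A Y B).hom := by
    rw [← S.aMul_natural (𝟙 A) (S.gl Y).hom (𝟙 B)]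
  rw [reassoc_of% hn, Iso.hom_inv_id, Category.comp_id]

/-- K16 (first diagram) -/
theorem k16_first {A B : C} {xA : S.mul A S.zero ⟶ S.zero} {yB : S.mul S.zero B ⟶ S.zero}
    (hA : S.IsLhat A xA) (hB : S.IsRhat B yB) :
    S.mulHom (𝟙 A) yB ≫ xA
      = (S.aMul A S.zero B).hom ≫ S.mulHom xA (𝟙 B) ≫ yB := by
  have e := (k16_aux1 S hA hB S.zero).trans (k16_aux2 S hA hB S.zero).symm
  have e2 := (cancel_epi (S.mulHom (𝟙 A) (S.distR S.zero S.zero B).hom)).1 e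
  have e3 := (cancel_epi (S.distL A (S.mul S.zero B) (S.mul S.zero B)).hom).1 e2
  have e4 := (cancel_mono (S.gl (S.mul A (S.mul S.zero B))).hom).1 e3
  exact cancel_add_unit S (S.mulHom (𝟙 A) yB ≫ xA) e4

/-- K18 : A ⊗ (B ⊕ 0) -/
theorem k18_left {A B : C} {xA : S.mul A S.zero ⟶ S.zero} (hA : S.IsLhat A xA) :
    (S.distL A B S.zero).hom ≫ S.addHom (𝟙 (S.mul A B)) xA ≫ (S.dr (S.mul A B)).hom
      = S.mulHom (𝟙 A) (S.dr B).hom := by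
  have h1 : S.addHom (𝟙 (S.mul A B)) xA ≫ (S.dr (S.mul A B)).hom
      = (S.csym (S.mul A B) (S.mul A S.zero)).hom ≫ S.addHom xA (𝟙 (S.mul A B))
        ≫ (S.gl (S.mul A B)).hom := by
    rw [← csym_dr_gl S (S.mul A B), ← Category.assoc,
      S.csym_natural (𝟙 (S.mul A B)) xA, Category.assoc]
  rw [h1]
  have h2 : (S.distL A B S.zero).hom ≫ (S.csym (S.mul A B) (S.mul A S.zero)).hom
      = S.mulHom (𝟙 A) (S.csym B S.zero).hom ≫ (S.distL A S.zero B).hom :=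
    (S.distL_csym A B S.zero).symm
  rw [reassoc_of% h2, hA B, ← mulHom_comp_right, csym_dr_gl]

/-- K18 : (B ⊕ 0) ⊗ A -/
theorem k18_right {A B : C} {yA : S.mul S.zero A ⟶ S.zero} (hA : S.IsRhat A yA) :
    (S.distR B S.zero A).hom ≫ S.addHom (𝟙 (S.mul B A)) yA ≫ (S.dr (S.mul B A)).hom
      = S.mulHom (S.dr B).hom (𝟙 A) := by
  have h1 : S.addHom (𝟙 (S.mul B A)) yA ≫ (S.dr (S.mul B A)).hom
      = (S.csym (S.mul B A) (S.mul S.zero A)).hom ≫ S.addHom yA (𝟙 (S.mul B A))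
        ≫ (S.gl (S.mul B A)).hom := by
    rw [← csym_dr_gl S (S.mul B A), ← Category.assoc,
      S.csym_natural (𝟙 (S.mul B A)) yA, Category.assoc]
  rw [h1]
  have h2 : (S.distR B S.zero A).hom ≫ (S.csym (S.mul B A) (S.mul S.zero A)).hom
      = S.mulHom (S.csym B S.zero).hom (𝟙 A) ≫ (S.distR S.zero B A).hom :=
    (S.distR_csym B S.zero A).symm
  rw [reassoc_of% h2, hA B, ← mulHom_comp_left, csym_dr_gl]

end AnnCat

/-- Every strong Ann-category (one with `L̂^0 = R̂^0`) is a ring category: with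
`x_A := L̂^A` and `y_A := R̂^A`, all axioms K1–K18 of Kapranov–Voevodsky hold. -/
theorem strong_ann_is_ring_category {C : Type u} [Groupoid.{v} C] (S : AnnCat C)
    (x : ∀ A : C, S.mul A S.zero ≅ S.zero) (hx : ∀ A : C, S.IsLhat A (x A).hom)
    (y : ∀ A : C, S.mul S.zero A ≅ S.zero) (hy : ∀ A : C, S.IsRhat A (y A).hom)
    (hstrong : (x S.zero).hom = (y S.zero).hom) :
    -- K1: c is a symmetry
    (∀ X Y : C, (S.csym X Y).hom ≫ (S.csym Y X).hom = 𝟙 (S.add X Y)) ∧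
    -- K2: 𝔏 is compatible with c
    (∀ A B D : C, S.mulHom (𝟙 A) (S.csym B D).hom ≫ (S.distL A D B).hom
        = (S.distL A B D).hom ≫ (S.csym (S.mul A B) (S.mul A D)).hom) ∧
    -- K3: ℜ is compatible with c
    (∀ A B D : C, S.mulHom (S.csym A B).hom (𝟙 D) ≫ (S.distR B A D).hom
        = (S.distR A B D).hom ≫ (S.csym (S.mul A D) (S.mul B D)).hom) ∧
    -- K4: ℜ is compatible with a⁺
    (∀ A B D E : C, S.mulHom (S.aPlus A B D).hom (𝟙 E) ≫ (S.distR (S.add A B) D E).hom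
          ≫ S.addHom (S.distR A B E).hom (𝟙 (S.mul D E))
        = (S.distR A (S.add B D) E).hom ≫ S.addHom (𝟙 (S.mul A E)) (S.distR B D E).hom
          ≫ (S.aPlus (S.mul A E) (S.mul B E) (S.mul D E)).hom) ∧
    -- K5: 𝔏 is compatible with a⁺
    (∀ A B D E : C, S.mulHom (𝟙 A) (S.aPlus B D E).hom ≫ (S.distL A (S.add B D) E).hom
          ≫ S.addHom (S.distL A B D).hom (𝟙 (S.mul A E))
        = (S.distL A B (S.add D E)).hom ≫ S.addHom (𝟙 (S.mul A B)) (S.distL A D E).hom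
          ≫ (S.aPlus (S.mul A B) (S.mul A D) (S.mul A E)).hom) ∧
    -- K6 = (1.1)
    (∀ A B X Y : C,
      S.mulHom (𝟙 A) (S.distL B X Y).hom ≫ (S.distL A (S.mul B X) (S.mul B Y)).hom
          ≫ S.addHom (S.aMul A B X).hom (S.aMul A B Y).hom
        = (S.aMul A B (S.add X Y)).hom ≫ (S.distL (S.mul A B) X Y).hom) ∧
    -- K7 = (1.1')
    (∀ X Y B A : C,
      (S.aMul (S.add X Y) B A).hom ≫ S.mulHom (S.distR X Y B).hom (𝟙 A)
          ≫ (S.distR (S.mul X B) (S.mul Y B) A).hom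
        = (S.distR X Y (S.mul B A)).hom ≫ S.addHom (S.aMul X B A).hom (S.aMul Y B A).hom) ∧
    -- K8 = (1.2)
    (∀ A X Y B : C,
      (S.aMul A (S.add X Y) B).hom ≫ S.mulHom (S.distL A X Y).hom (𝟙 B)
          ≫ (S.distR (S.mul A X) (S.mul A Y) B).hom
        = S.mulHom (𝟙 A) (S.distR X Y B).hom ≫ (S.distL A (S.mul X B) (S.mul Y B)).hom
          ≫ S.addHom (S.aMul A X B).hom (S.aMul A Y B).hom) ∧
    -- K9
    (∀ A B X Y : C,
      (S.distL (S.add A B) X Y).hom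
          ≫ S.addHom (S.distR A B X).hom (S.distR A B Y).hom
          ≫ (S.aPlus (S.add (S.mul A X) (S.mul B X)) (S.mul A Y) (S.mul B Y)).hom
          ≫ S.addHom (S.aPlus (S.mul A X) (S.mul B X) (S.mul A Y)).inv (𝟙 (S.mul B Y))
          ≫ S.addHom (S.addHom (𝟙 (S.mul A X)) (S.csym (S.mul B X) (S.mul A Y)).hom)
              (𝟙 (S.mul B Y))
          ≫ S.addHom (S.aPlus (S.mul A X) (S.mul A Y) (S.mul B X)).hom (𝟙 (S.mul B Y))
          ≫ (S.aPlus (S.add (S.mul A X) (S.mul A Y)) (S.mul B X) (S.mul B Y)).inv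
        = (S.distR A B (S.add X Y)).hom
          ≫ S.addHom (S.distL A X Y).hom (S.distL B X Y).hom) ∧
    -- K10: x₀ = y₀
    ((x S.zero).hom = (y S.zero).hom) ∧
    -- K11
    (∀ A B : C, (S.distL S.zero A B).hom ≫ S.addHom (y A).hom (y B).hom
        ≫ (S.gl S.zero).hom = (y (S.add A B)).hom) ∧
    -- K12
    (∀ A B : C, (S.distR A B S.zero).hom ≫ S.addHom (x A).hom (x B).hom
        ≫ (S.gl S.zero).hom = (x (S.add A B)).hom) ∧
    -- K13: y₁ = r₀
    ((y S.one).hom = (S.ru S.zero).hom) ∧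
    -- K14: x₁ = l₀
    ((x S.one).hom = (S.lu S.zero).hom) ∧
    -- K15
    (∀ A B : C, (y (S.mul A B)).hom
        = (S.aMul S.zero A B).hom ≫ S.mulHom (y A).hom (𝟙 B) ≫ (y B).hom) ∧
    -- K16 (first diagram)
    (∀ A B : C, S.mulHom (𝟙 A) (y B).hom ≫ (x A).hom
        = (S.aMul A S.zero B).hom ≫ S.mulHom (x A).hom (𝟙 B) ≫ (y B).hom) ∧
    -- K16 (second diagram)
    (∀ A B : C, (S.aMul A B S.zero).hom ≫ (x (S.mul A B)).hom
        = S.mulHom (𝟙 A) (x B).hom ≫ (x A).hom) ∧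
    -- K17
    (∀ A B : C, (S.distL A S.zero B).hom ≫ S.addHom (x A).hom (𝟙 (S.mul A B))
        ≫ (S.gl (S.mul A B)).hom = S.mulHom (𝟙 A) (S.gl B).hom) ∧
    -- K18: (0⊕B)⊗A
    (∀ A B : C, (S.distR S.zero B A).hom ≫ S.addHom (y A).hom (𝟙 (S.mul B A))
        ≫ (S.gl (S.mul B A)).hom = S.mulHom (S.gl B).hom (𝟙 A)) ∧
    -- K18: A⊗(B⊕0)
    (∀ A B : C, (S.distL A B S.zero).hom ≫ S.addHom (𝟙 (S.mul A B)) (x A).hom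
        ≫ (S.dr (S.mul A B)).hom = S.mulHom (𝟙 A) (S.dr B).hom) ∧
    -- K18: (B⊕0)⊗A
    (∀ A B : C, (S.distR B S.zero A).hom ≫ S.addHom (𝟙 (S.mul B A)) (y A).hom
        ≫ (S.dr (S.mul B A)).hom = S.mulHom (S.dr B).hom (𝟙 A)) := by
  refine ⟨S.csym_symm, S.distL_csym, S.distR_csym, S.distR_aPlus, S.distL_aPlus,
    S.ann11, S.ann11', S.ann12, ?_, hstrong, ?_, ?_, ?_, ?_, ?_, ?_, ?_,
    (fun A B => hx A B), (fun A B => hy A B), ?_, ?_⟩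
  · intro A B X Y
    simpa only [Category.assoc] using S.ann13 A B X Y
  · exact fun A B => S.rhat_unique (S.isRhat_add (hy A) (hy B)) (hy (S.add A B))
  · exact fun A B => S.lhat_unique (S.isLhat_add (hx A) (hx B)) (hx (S.add A B))
  · exact S.rhat_unique (hy S.one) S.isRhat_ru
  · exact S.lhat_unique (hx S.one) S.isLhat_lu
  · exact fun A B => S.rhat_unique (hy (S.mul A B)) (S.isRhat_mul (hy A) (hy B))
  · exact fun A B => S.k16_first (hx A) (hy B)
  · intro A B
    have e := S.lhat_unique (hx (S.mul A B)) (S.isLhat_mul (hx A) (hx B))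
    rw [e, Iso.hom_inv_id_assoc]
  · exact fun A B => S.k18_left (hx A)
  · exact fun A B => S.k18_right (hy A)
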